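/- arXiv:1506.02529 — 4 statements merged into one kernel-verified Lean document; each statement's English description precedes it below -/
import Mathlib

section
/- Let G be a locally compact, second-countable Hausdorff topological group with left Haar measure μ (which has full support), let e denote its identity element, and let K : G × G → ℝ be continuous. Suppose the integral operator Φ(U)(g) = ∫_G K(g,q) U(q) dμ(q) commutes with the left-regular representation, i.e. for every continuous compactly supported U : G → ℝ and all g, g' ∈ G one has ∫_G K(g', q) U(g⁻¹ q) dμ(q) = ∫_G K(g⁻¹ g', q) U(q) dμ(q). Then K(g, q) = K(e, g⁻¹ q) for all g, q ∈ G. -/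
/-!
Translating the left side of the commutation relation by `g` (left invariance of `μ`) shows that
the continuous functions `s ↦ K (g, g * s)` and `s ↦ K (1, s)` have the same integral against every
continuous compactly supported test function. Such functions coincide: testing their difference
`f` against `f * φ`, for a nonnegative Urysohn bump `φ` equal to `1` at a point, gives the integral
of a nonnegative continuous function that is positive there, which vanishes only if `f` does.
-/

open MeasureTheory

section FundamentalLemma

variable {X : Type*} [TopologicalSpace X] [RegularSpace X] [LocallyCompactSpace X]
  [MeasurableSpace X] [OpensMeasurableSpace X]
  (μ : Measure X) [μ.IsOpenPosMeasure] [IsFiniteMeasureOnCompacts μ]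

theorem eq_zero_of_forall_integral_mul_eq_zero {f : X → ℝ} (hf : Continuous f)
    (h : ∀ U : X → ℝ, Continuous U → HasCompactSupport U → ∫ q, f q * U q ∂μ = 0) (x : X) :
    f x = 0 := by
  by_contra hfx
  obtain ⟨φ, hφx, -, hφc, hφ⟩ :=
    exists_continuous_one_zero_of_isCompact isCompact_singleton isClosed_empty
      (Set.disjoint_empty {x})
  have hpos : 0 < ∫ q, f q * (f q * φ q) ∂μ := by
    refine (hf.mul (hf.mul φ.continuous)).integral_pos_of_hasCompactSupport_nonneg_nonzero
      hφc.mul_left.mul_left (fun q => ?_) (x := x) ?_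
    · rw [← mul_assoc]
      exact mul_nonneg (mul_self_nonneg _) (hφ q).1
    · simpa [hφx rfl] using hfx
  exact hpos.ne' (h _ (hf.mul φ.continuous) hφc.mul_left)

theorem eq_of_forall_integral_mul_eq {f₁ f₂ : X → ℝ}
    (hf₁ : Continuous f₁) (hf₂ : Continuous f₂)
    (h : ∀ U : X → ℝ, Continuous U → HasCompactSupport U →
      ∫ q, f₁ q * U q ∂μ = ∫ q, f₂ q * U q ∂μ) :
    f₁ = f₂ := by
  funext x
  refine sub_eq_zero.mp
    (eq_zero_of_forall_integral_mul_eq_zero μ (hf₁.sub hf₂) (fun U hU hUc => ?_) x)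
  have hint : ∀ f : X → ℝ, Continuous f → Integrable (fun q => f q * U q) μ := fun f hf =>
    (hf.mul hU).integrable_of_hasCompactSupport hUc.mul_left
  simp only [Pi.sub_apply, sub_mul]
  rw [integral_sub (hint f₁ hf₁) (hint f₂ hf₂), h U hU hUc, sub_self]

end FundamentalLemma

theorem kernel_left_invariant_general
    {G : Type*} [Group G] [TopologicalSpace G] [IsTopologicalGroup G]
    [LocallyCompactSpace G]
    [MeasurableSpace G] [BorelSpace G]
    (μ : Measure G) [μ.IsHaarMeasure]
    (K : G × G → ℝ) (hK : Continuous K)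
    (hcommute : ∀ U : G → ℝ, Continuous U → HasCompactSupport U → ∀ g g' : G,
      ∫ q, K (g', q) * U (g⁻¹ * q) ∂μ = ∫ q, K (g⁻¹ * g', q) * U q ∂μ) :
    ∀ g q : G, K (g, q) = K (1, g⁻¹ * q) := by
  intro g q
  have htranslate : (fun s => K (g, g * s)) = fun s => K (1, s) := by
    refine eq_of_forall_integral_mul_eq μ (by fun_prop) (by fun_prop) fun U hU hUc => ?_
    calc ∫ s, K (g, g * s) * U s ∂μ = ∫ s, K (g, s) * U (g⁻¹ * s) ∂μ := by
          simpa using (integral_mul_left_eq_self (μ := μ) (fun s => K (g, s) * U (g⁻¹ * s)) g)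
      _ = ∫ s, K (1, s) * U s ∂μ := by simpa using hcommute U hU hUc g g
  simpa using congrFun htranslate (g⁻¹ * q)

/-- A legal (left-invariance-commuting) kernel operator on a locally compact,
second-countable Hausdorff group with left Haar measure has a kernel of the form
`K (g, q) = K (1, g⁻¹ * q)`. -/
theorem kernel_left_invariant
    {G : Type*} [Group G] [TopologicalSpace G] [IsTopologicalGroup G]
    [LocallyCompactSpace G] [SecondCountableTopology G] [T2Space G]
    [MeasurableSpace G] [BorelSpace G]
    (μ : Measure G) [μ.IsHaarMeasure]
    (K : G × G → ℝ) (hK : Continuous K)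
    (hcommute : ∀ U : G → ℝ, Continuous U → HasCompactSupport U → ∀ g g' : G,
      ∫ q, K (g', q) * U (g⁻¹ * q) ∂μ = ∫ q, K (g⁻¹ * g', q) * U q ∂μ) :
    ∀ g q : G, K (g, q) = K (1, g⁻¹ * q) :=
  kernel_left_invariant_general μ K hK hcommute
end

section
/- Let c ∈ ℝ³ with 0 < ‖c‖ < 2π and x ∈ ℝ³. Then the 4×4 matrix exponential of the block matrix A = [[skew(c), F(c, x)], [0, 0]] (upper-left 3×3 block skew(c), upper-right 3×1 block the column vector F(c,x), bottom row all zeros) equals the block matrix [[exp(skew(c)), x], [0, 1]] (upper-left block the 3×3 matrix exponential of skew(c), upper-right block the column vector x, bottom row (0,0,0,1)). In other words, the formula F(c,x) recovers exactly the spatial coefficients c⁽¹⁾ of the logarithm of the rigid body motion (x, exp(skew(c))) ∈ SE(3) in its homogeneous 4×4 matrix representation. -/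
open Matrix

/-- The skew-symmetric matrix associated to a vector `c ∈ ℝ³`. -/
def skew (c : Fin 3 → ℝ) : Matrix (Fin 3) (Fin 3) ℝ :=
  !![0, -c 2, c 1; c 2, 0, -c 0; -c 1, c 0, 0]

/-- The Euclidean norm of a vector in `ℝ³`. -/
noncomputable def enorm3 (c : Fin 3 → ℝ) : ℝ :=
  Real.sqrt (c 0 ^ 2 + c 1 ^ 2 + c 2 ^ 2)

/-- Equation (11) of the paper: the spatial coefficients of the logarithm on `SE(3)`,
`F(c,x) = (I − (1/2)·skew c + q⁻²·(1 − (q/2)·cot(q/2))·(skew c)²) x` with `q = ‖c‖`. -/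
noncomputable def F (c x : Fin 3 → ℝ) : Fin 3 → ℝ :=
  ((1 : Matrix (Fin 3) (Fin 3) ℝ) - (1 / 2 : ℝ) • skew c +
      ((enorm3 c)⁻¹ ^ 2 *
        (1 - enorm3 c / 2 * (Real.cos (enorm3 c / 2) / Real.sin (enorm3 c / 2)))) •
        (skew c * skew c)).mulVec x

/-!
Write `S = skew c` and `q = ‖c‖`. The powers of `A = [[S, v], [0, 0]]` are
`A^(k+1) = [[S^(k+1), S^k v], [0, 0]]`, so `exp A = [[exp S, J v], [0, 1]]` with
`J = ∑ S^k / (k+1)!`. Since `S³ = -q² S`, this series collapses to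
`J = 1 + ((1 - cos q) / q²) S + ((q - sin q) / q³) S²`, and the half-angle formulas show that
the matrix defining `F` is the inverse of `J`; hence `J F(c, x) = x`.
-/

open scoped Nat
open Real

section BlockMatrices

variable {X R l m n o : Type*} [AddCommMonoid R] [TopologicalSpace R]

theorem HasSum.matrix_fromBlocks {A : X → Matrix n l R} {B : X → Matrix n m R}
    {C : X → Matrix o l R} {D : X → Matrix o m R} {a : Matrix n l R} {b : Matrix n m R}
    {c : Matrix o l R} {d : Matrix o m R} (hA : HasSum A a) (hB : HasSum B b) (hC : HasSum C c)
    (hD : HasSum D d) :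
    HasSum (fun x => fromBlocks (A x) (B x) (C x) (D x)) (fromBlocks a b c d) := by
  refine Pi.hasSum.2 fun i => Pi.hasSum.2 fun j => ?_
  rcases i with i | i <;> rcases j with j | j
  · exact Pi.hasSum.1 (Pi.hasSum.1 hA i) j
  · exact Pi.hasSum.1 (Pi.hasSum.1 hB i) j
  · exact Pi.hasSum.1 (Pi.hasSum.1 hC i) j
  · exact Pi.hasSum.1 (Pi.hasSum.1 hD i) j

end BlockMatrices

namespace Matrix

variable {m n : Type*} [Fintype m] [DecidableEq m] [Fintype n] [DecidableEq n]

theorem fromBlocks_zero_zero_pow_succ {α : Type*} [Semiring α] (S : Matrix n n α)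
    (V : Matrix n m α) (k : ℕ) :
    fromBlocks S V 0 0 ^ (k + 1) = fromBlocks (S ^ (k + 1)) (S ^ k * V) 0 (0 : Matrix m m α) := by
  induction k with
  | zero => simp
  | succ k ih => simp [pow_succ _ (k + 1), ih, fromBlocks_multiply, pow_succ]

variable {𝕂 : Type*} [RCLike 𝕂]

theorem hasSum_expSeries (A : Matrix n n 𝕂) :
    HasSum (fun k => (k !⁻¹ : 𝕂) • A ^ k) (NormedSpace.exp A) :=
  open scoped Matrix.Norms.Operator in NormedSpace.exp_series_hasSum_exp' A

theorem exp_fromBlocks_zero_zero (S : Matrix n n 𝕂) (V : Matrix n m 𝕂) {J : Matrix n n 𝕂}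
    (hJ : HasSum (fun k => ((k + 1)!⁻¹ : 𝕂) • S ^ k) J) :
    NormedSpace.exp (fromBlocks S V 0 0) =
      fromBlocks (NormedSpace.exp S) (J * V) 0 (1 : Matrix m m 𝕂) := by
  have hS : HasSum (fun k => ((k + 1)!⁻¹ : 𝕂) • S ^ (k + 1)) (NormedSpace.exp S - 1) := by
    simpa using (hasSum_nat_add_iff' 1).2 S.hasSum_expSeries
  have hV : HasSum (fun k => ((k + 1)!⁻¹ : 𝕂) • (S ^ k * V)) (J * V) := by
    simpa [Function.comp_def, smul_mul_assoc] using
      hJ.map (addMonoidHomMulRight V) (continuous_id.matrix_mul continuous_const)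
  have hA : HasSum (fun k => ((k + 1)!⁻¹ : 𝕂) • fromBlocks S V 0 0 ^ (k + 1))
      (fromBlocks (NormedSpace.exp S - 1) (J * V) 0 (0 : Matrix m m 𝕂)) := by
    convert hS.matrix_fromBlocks hV (hasSum_zero (α := Matrix m n 𝕂))
      (hasSum_zero (α := Matrix m m 𝕂)) using 2 with k
    rw [fromBlocks_zero_zero_pow_succ, fromBlocks_smul, smul_zero, smul_zero]
  refine (fromBlocks S V 0 0).hasSum_expSeries.unique ?_
  convert HasSum.zero_add (f := fun k => (k !⁻¹ : 𝕂) • fromBlocks S V 0 0 ^ k) hA using 1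
  rw [pow_zero, Nat.factorial_zero, Nat.cast_one, inv_one, one_smul, ← fromBlocks_one,
    fromBlocks_add]
  simp

end Matrix

theorem Real.hasSum_one_sub_cos_div_sq {q : ℝ} (hq : q ≠ 0) :
    HasSum (fun j : ℕ => (-q ^ 2) ^ j / (2 * j + 2)!) ((1 - cos q) / q ^ 2) := by
  have h := ((hasSum_nat_add_iff' 1).2 (hasSum_cos q)).mul_left (-(q ^ 2)⁻¹)
  rw [show -(q ^ 2)⁻¹ * (cos q - ∑ i ∈ Finset.range 1, (-1) ^ i * q ^ (2 * i) / (2 * i)!) =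
    (1 - cos q) / q ^ 2 by simp; field_simp; ring] at h
  refine h.congr_fun fun j => ?_
  rw [neg_pow, ← pow_mul, show 2 * (j + 1) = 2 * j + 2 by ring]
  field_simp
  ring

theorem Real.hasSum_sub_sin_div_cube {q : ℝ} (hq : q ≠ 0) :
    HasSum (fun j : ℕ => (-q ^ 2) ^ j / (2 * j + 3)!) ((q - sin q) / q ^ 3) := by
  have h := ((hasSum_nat_add_iff' 1).2 (hasSum_sin q)).mul_left (-(q ^ 3)⁻¹)
  rw [show -(q ^ 3)⁻¹ * (sin q - ∑ i ∈ Finset.range 1, (-1) ^ i * q ^ (2 * i + 1) / (2 * i + 1)!) =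
    (q - sin q) / q ^ 3 by simp; field_simp; ring] at h
  refine h.congr_fun fun j => ?_
  rw [neg_pow, ← pow_mul, show 2 * (j + 1) + 1 = 2 * j + 3 by ring]
  field_simp
  ring

section CubicRelation

variable {A : Type*} [Ring A] [Algebra ℝ A] {S : A} {q : ℝ}

theorem pow_two_mul_add_one_of_pow_three (hS : S ^ 3 = (-q ^ 2) • S) (k : ℕ) :
    S ^ (2 * k + 1) = (-q ^ 2) ^ k • S := by
  induction k with
  | zero => simp
  | succ k ih => rw [show 2 * (k + 1) + 1 = 2 * k + 1 + 2 by ring, pow_add, ih, smul_mul_assoc,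
      ← pow_succ' S 2, hS, smul_smul, ← pow_succ]

theorem pow_two_mul_add_two_of_pow_three (hS : S ^ 3 = (-q ^ 2) • S) (k : ℕ) :
    S ^ (2 * k + 2) = (-q ^ 2) ^ k • S ^ 2 := by
  rw [pow_succ, pow_two_mul_add_one_of_pow_three hS, smul_mul_assoc, ← pow_two]

theorem hasSum_pow_div_factorial_succ_of_pow_three [TopologicalSpace A] [ContinuousAdd A]
    [ContinuousSMul ℝ A] (hS : S ^ 3 = (-q ^ 2) • S) (hq : q ≠ 0) :
    HasSum (fun k => ((k + 1)!⁻¹ : ℝ) • S ^ k)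
      (1 + ((1 - cos q) / q ^ 2) • S + ((q - sin q) / q ^ 3) • S ^ 2) := by
  have hS_part : HasSum (fun j => ((2 * j + 2)!⁻¹ : ℝ) • S ^ (2 * j + 1))
      (((1 - cos q) / q ^ 2) • S) := by
    refine ((hasSum_one_sub_cos_div_sq hq).smul_const S).congr_fun fun j => ?_
    rw [pow_two_mul_add_one_of_pow_three hS, smul_smul, div_eq_inv_mul]
  have hS2_part : HasSum (fun j => ((2 * j + 3)!⁻¹ : ℝ) • S ^ (2 * j + 2))
      (((q - sin q) / q ^ 3) • S ^ 2) := by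
    refine ((hasSum_sub_sin_div_cube hq).smul_const (S ^ 2)).congr_fun fun j => ?_
    rw [pow_two_mul_add_two_of_pow_three hS, smul_smul, div_eq_inv_mul]
  have htail : HasSum (fun k => ((k + 2)!⁻¹ : ℝ) • S ^ (k + 1)) _ := hS_part.even_add_odd hS2_part
  rw [add_assoc]
  convert HasSum.zero_add (f := fun k => ((k + 1)!⁻¹ : ℝ) • S ^ k) htail using 2
  simp

theorem one_add_smul_add_smul_sq_mul_eq_one (hS : S ^ 3 = (-q ^ 2) • S) (hs : sin (q / 2) ≠ 0) :
    (1 + ((1 - cos q) / q ^ 2) • S + ((q - sin q) / q ^ 3) • S ^ 2) *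
      (1 - (1 / 2 : ℝ) • S + (q⁻¹ ^ 2 * (1 - q / 2 * (cos (q / 2) / sin (q / 2)))) • S ^ 2) =
      1 := by
  have hq : q ≠ 0 := by rintro rfl; simp at hs
  have hcos : cos q = 2 * cos (q / 2) ^ 2 - 1 := by
    rw [← cos_two_mul, mul_div_cancel₀ _ two_ne_zero]
  have hsin : sin q = 2 * sin (q / 2) * cos (q / 2) := by
    rw [← sin_two_mul, mul_div_cancel₀ _ two_ne_zero]
  have hpyth := sin_sq_add_cos_sq (q / 2)
  set α := (1 - cos q) / q ^ 2
  set β := q⁻¹ ^ 2 * (1 - q / 2 * (cos (q / 2) / sin (q / 2)))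
  set γ := (q - sin q) / q ^ 3
  have hS_coeff : α - 1 / 2 - α * β * q ^ 2 + γ * q ^ 2 / 2 = 0 := by
    simp only [α, β, γ, hcos, hsin]
    field_simp
    linear_combination (-(2 * q * cos (q / 2))) * hpyth
  have hS2_coeff : β - α / 2 + γ - γ * β * q ^ 2 = 0 := by
    simp only [α, β, γ, hcos, hsin]
    field_simp
    ring
  have hS12 : S * S ^ 2 = (-q ^ 2) • S := by rw [← pow_succ', hS]
  have hS21 : S ^ 2 * S = (-q ^ 2) • S := by rw [← pow_succ, hS]
  have hS22 : S ^ 2 * S ^ 2 = (-q ^ 2) • S ^ 2 := by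
    rw [← pow_add, pow_succ, hS, smul_mul_assoc, ← sq]
  clear_value α β γ
  calc _ = 1 + (α - 1 / 2 - α * β * q ^ 2 + γ * q ^ 2 / 2) • S
        + (β - α / 2 + γ - γ * β * q ^ 2) • S ^ 2 := by
        simp only [add_mul, mul_add, mul_sub, one_mul, mul_one, smul_mul_assoc,
          mul_smul_comm, smul_smul, ← sq S, hS12, hS21, hS22]
        module
    _ = 1 := by rw [hS_coeff, hS2_coeff, zero_smul, zero_smul, add_zero, add_zero]

end CubicRelation

theorem skew_pow_three (c : Fin 3 → ℝ) : skew c ^ 3 = (-enorm3 c ^ 2) • skew c := by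
  rw [enorm3, sq_sqrt (by positivity)]
  ext i j
  fin_cases i <;> fin_cases j <;> simp [skew, pow_succ, mul_apply, Fin.sum_univ_succ] <;> ring

/-- `F(c, x)` gives exactly the spatial part of the logarithm of a rigid body
motion `(x, exp (skew c))` in homogeneous coordinates:
`exp [[skew c, F(c,x)], [0, 0]] = [[exp (skew c), x], [0, 1]]` for `0 < ‖c‖ < 2π`. -/
theorem exp_blockMatrix_log (c : Fin 3 → ℝ) (hc0 : 0 < enorm3 c)
    (hc2 : enorm3 c < 2 * Real.pi) (x : Fin 3 → ℝ) :
    NormedSpace.exp (Matrix.fromBlocks (skew c) (Matrix.replicateCol (Fin 1) (F c x)) (0 : Matrix (Fin 1) (Fin 3) ℝ) (0 : Matrix (Fin 1) (Fin 1) ℝ)) =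
      Matrix.fromBlocks (NormedSpace.exp (skew c)) (Matrix.replicateCol (Fin 1) x) (0 : Matrix (Fin 1) (Fin 3) ℝ) (1 : Matrix (Fin 1) (Fin 1) ℝ) := by
  have hq : enorm3 c ≠ 0 := hc0.ne'
  have hs : sin (enorm3 c / 2) ≠ 0 := (sin_pos_of_pos_of_lt_pi (by linarith) (by linarith)).ne'
  have hJ := hasSum_pow_div_factorial_succ_of_pow_three (skew_pow_three c) hq
  rw [exp_fromBlocks_zero_zero _ _ hJ, F, replicateCol_mulVec, ← Matrix.mul_assoc, ← sq,
    one_add_smul_add_smul_sq_mul_eq_one (skew_pow_three c) hs, Matrix.one_mul]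
end

section
/- For all real β, γ and α', with β ∈ (−π, π), β ≠ 0: c⁽²⁾(β, γ + α') = R_z(α') · c⁽²⁾(β, γ) and, for every y ∈ ℝ³, c⁽¹⁾(R_z(α') y, β, γ + α') = R_z(α') · c⁽¹⁾(y, β, γ). Consequently the full coefficient vector satisfies c(R_z(α') y, β, γ + α') = Z_{α'} c(y, β, γ) with Z_{α'} = diag(R_z(α'), R_z(α')). -/
open Matrix

/-- Counter-clockwise rotation about the `z`-axis by angle `θ`. -/
noncomputable def Rz (θ : ℝ) : Matrix (Fin 3) (Fin 3) ℝ :=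
  !![Real.cos θ, -Real.sin θ, 0; Real.sin θ, Real.cos θ, 0; 0, 0, 1]

/-- The rotational logarithm coefficients `c⁽²⁾(β,γ) = β · R_z(γ) e_y` of the rotation
`R_z(γ) R_y(β) R_z(−γ)` (section `α = −γ`). -/
noncomputable def c2 (β γ : ℝ) : Fin 3 → ℝ :=
  β • (Rz γ).mulVec ![0, 1, 0]

/-- The spatial logarithm coefficients `c⁽¹⁾(y,β,γ) = F(c⁽²⁾(β,γ), y)`. -/
noncomputable def c1 (y : Fin 3 → ℝ) (β γ : ℝ) : Fin 3 → ℝ :=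
  F (c2 β γ) y


lemma c2_eq (β γ : ℝ) : c2 β γ = ![-(β * Real.sin γ), β * Real.cos γ, 0] := by
  funext i
  fin_cases i <;>
    simp [c2, Rz, mulVec, dotProduct, Fin.sum_univ_three]

lemma c2_add (β γ α' : ℝ) : c2 β (γ + α') = (Rz α').mulVec (c2 β γ) := by
  funext i
  rw [c2_eq, c2_eq]
  fin_cases i <;>
    simp [Rz, mulVec, dotProduct, Fin.sum_univ_three, Real.sin_add, Real.cos_add] <;>
      first
        | ring1
        | (ring_nf; rw [Real.sin_sq α']; ring)

lemma skew_comm (β γ α' : ℝ) :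
    skew (c2 β (γ + α')) * Rz α' = Rz α' * skew (c2 β γ) := by
  ext i j
  rw [c2_eq, c2_eq]
  fin_cases i <;> fin_cases j <;>
    simp [skew, Rz, Matrix.mul_apply, Fin.sum_univ_three, Real.sin_add, Real.cos_add] <;>
      first
        | ring1
        | (ring_nf; rw [Real.sin_sq α']; ring)

lemma enorm3_c2 (β γ : ℝ) : enorm3 (c2 β γ) = Real.sqrt (β ^ 2) := by
  rw [c2_eq]
  unfold enorm3
  congr 1
  simp
  linear_combination β ^ 2 * Real.sin_sq_add_cos_sq γ

/-- Equation (17) of the paper: the logarithm coefficients for the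
section `α = −γ` are equivariant under rotations about the `z`-axis:
`c⁽²⁾(β, γ + α') = R_z(α') c⁽²⁾(β, γ)` and
`c⁽¹⁾(R_z(α') y, β, γ + α') = R_z(α') c⁽¹⁾(y, β, γ)`. -/
theorem log_coefficients_equivariant (β γ α' : ℝ) (hβ : β ∈ Set.Ioo (-Real.pi) Real.pi)
    (hβ0 : β ≠ 0) :
    c2 β (γ + α') = (Rz α').mulVec (c2 β γ) ∧
      ∀ y : Fin 3 → ℝ, c1 ((Rz α').mulVec y) β (γ + α') = (Rz α').mulVec (c1 y β γ) := by
  refine ⟨c2_add β γ α', fun y => ?_⟩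
  have hn : enorm3 (c2 β (γ + α')) = enorm3 (c2 β γ) := by
    rw [enorm3_c2, enorm3_c2]
  have hsk := skew_comm β γ α'
  set k : ℝ := (enorm3 (c2 β γ))⁻¹ ^ 2 *
      (1 - enorm3 (c2 β γ) / 2 *
        (Real.cos (enorm3 (c2 β γ) / 2) / Real.sin (enorm3 (c2 β γ) / 2))) with hk
  have hM : ((1 : Matrix (Fin 3) (Fin 3) ℝ) - (1 / 2 : ℝ) • skew (c2 β (γ + α')) +
        k • (skew (c2 β (γ + α')) * skew (c2 β (γ + α')))) * Rz α' =
      Rz α' * ((1 : Matrix (Fin 3) (Fin 3) ℝ) - (1 / 2 : ℝ) • skew (c2 β γ) +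
        k • (skew (c2 β γ) * skew (c2 β γ))) := by
    have h2 : skew (c2 β (γ + α')) * skew (c2 β (γ + α')) * Rz α' =
        Rz α' * (skew (c2 β γ) * skew (c2 β γ)) := by
      rw [mul_assoc, hsk, ← mul_assoc, hsk, mul_assoc]
    rw [add_mul, sub_mul, mul_add, mul_sub, one_mul, mul_one, smul_mul_assoc,
      mul_smul_comm, hsk, smul_mul_assoc, mul_smul_comm, h2]
  unfold c1 F
  rw [hn, ← hk, mulVec_mulVec, mulVec_mulVec, hM]
end

section
/- Fix D₃₃ > 0, D₄₄ > 0 and t > 0. For y ∈ ℝ³, β ∈ (−π,π)\{0} and γ ∈ ℝ, define p(y, β, γ) := (4π t² D₃₃ D₄₄)⁻² · exp(−M(c⁽¹⁾(y,β,γ), c⁽²⁾(β,γ))² / (4t)). Then for every α' ∈ ℝ: p(R_z(α') y, β, γ + α') = p(y, β, γ). (This is the α-left-invariance of the new kernel approximation p_t^new: p_t^new(y, n) = p_t^new(R_{e_z,α'} y, R_{e_z,α'} n) for the orientation n = n(β,γ) = R_z(γ) R_y(β) R_z(−γ) e_z.) -/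
open Matrix

/-- The smoothed weighted modulus of the paper, on a coefficient vector
`c = (c¹,…,c⁶) = (a, b) ∈ ℝ³ × ℝ³ ≅ ℝ⁶`. -/
noncomputable def weightedModulus (D33 D44 : ℝ) (a b : Fin 3 → ℝ) : ℝ :=
  ((a 0 ^ 2 + a 1 ^ 2) / (D33 * D44) + b 2 ^ 2 / D44 +
      (a 2 ^ 2 / D33 + (b 0 ^ 2 + b 1 ^ 2) / D44) ^ 2) ^ ((1 : ℝ) / 4)

/-- The new kernel approximation `p_t^new` of the paper, in the coordinates
`(y, β, γ)` of the section `α = −γ`: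
`p(y,β,γ) = (4πt²D₃₃D₄₄)⁻² exp(−M(c⁽¹⁾(y,β,γ), c⁽²⁾(β,γ))²/(4t))`. -/
noncomputable def pNew (D33 D44 t : ℝ) (y : Fin 3 → ℝ) (β γ : ℝ) : ℝ :=
  ((4 * Real.pi * t ^ 2 * D33 * D44) ^ 2)⁻¹ *
    Real.exp (-(weightedModulus D33 D44 (c1 y β γ) (c2 β γ)) ^ 2 / (4 * t))

/- ### Auxiliary lemmas -/

lemma Rz_transpose (θ : ℝ) :
    (Rz θ)ᵀ = !![Real.cos θ, Real.sin θ, 0; -Real.sin θ, Real.cos θ, 0; 0, 0, 1] := by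
  ext i j; fin_cases i <;> fin_cases j <;> simp [Rz]

lemma transpose_mul_Rz (θ : ℝ) : (Rz θ)ᵀ * Rz θ = 1 := by
  ext i j
  rw [Rz_transpose]
  fin_cases i <;> fin_cases j <;>
    simp [Rz, Matrix.mul_apply, Fin.sum_univ_succ, Matrix.one_apply] <;>
    (first
      | ring1
      | linear_combination Real.sin_sq_add_cos_sq θ)

lemma skew_Rz (θ : ℝ) (c : Fin 3 → ℝ) :
    skew ((Rz θ).mulVec c) = Rz θ * skew c * (Rz θ)ᵀ := by
  rw [Rz_transpose]
  ext i j
  fin_cases i <;> fin_cases j <;>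
    simp [Rz, skew, Matrix.mul_apply, Matrix.mulVec, dotProduct, Fin.sum_univ_succ] <;>
    (first
      | ring1
      | linear_combination (c 2) * Real.sin_sq_add_cos_sq θ
      | linear_combination (-(c 2)) * Real.sin_sq_add_cos_sq θ)

lemma enorm3_Rz (θ : ℝ) (c : Fin 3 → ℝ) : enorm3 ((Rz θ).mulVec c) = enorm3 c := by
  unfold enorm3
  congr 1
  simp [Rz, Matrix.mulVec, dotProduct, Fin.sum_univ_succ]
  linear_combination (c 0 ^ 2 + c 1 ^ 2) * Real.sin_sq_add_cos_sq θ

lemma F_Rz (θ : ℝ) (c x : Fin 3 → ℝ) :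
    F ((Rz θ).mulVec c) ((Rz θ).mulVec x) = (Rz θ).mulVec (F c x) := by
  unfold F
  rw [enorm3_Rz, skew_Rz]
  set k : ℝ := (enorm3 c)⁻¹ ^ 2 *
    (1 - enorm3 c / 2 * (Real.cos (enorm3 c / 2) / Real.sin (enorm3 c / 2)))
  set M := Rz θ
  set S := skew c
  have hMM : Mᵀ * M = 1 := transpose_mul_Rz θ
  rw [Matrix.mulVec_mulVec, Matrix.mulVec_mulVec]
  have h1 : M * S * Mᵀ * M = M * S := by
    rw [Matrix.mul_assoc, hMM, Matrix.mul_one]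
  have key : (1 - (1 / 2 : ℝ) • (M * S * Mᵀ) + k • (M * S * Mᵀ * (M * S * Mᵀ))) * M =
      M * (1 - (1 / 2 : ℝ) • S + k • (S * S)) := by
    calc (1 - (1 / 2 : ℝ) • (M * S * Mᵀ) + k • (M * S * Mᵀ * (M * S * Mᵀ))) * M
        = M - (1 / 2 : ℝ) • (M * S * Mᵀ * M) + k • (M * S * Mᵀ * (M * S * Mᵀ) * M) := by
          rw [Matrix.add_mul, Matrix.sub_mul, Matrix.smul_mul, Matrix.smul_mul, Matrix.one_mul]
      _ = M - (1 / 2 : ℝ) • (M * S) + k • (M * (S * S)) := by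
          have h2 : M * S * Mᵀ * (M * S) = M * (S * S) := by
            rw [Matrix.mul_assoc (M * S) Mᵀ (M * S), ← Matrix.mul_assoc Mᵀ M S, hMM,
              Matrix.one_mul, Matrix.mul_assoc]
          rw [Matrix.mul_assoc (M * S * Mᵀ), h1, h2]
      _ = M * (1 - (1 / 2 : ℝ) • S + k • (S * S)) := by
          rw [Matrix.mul_add, Matrix.mul_sub, Matrix.mul_one, Matrix.mul_smul, Matrix.mul_smul]
  rw [key]

lemma weightedModulus_Rz (D33 D44 θ : ℝ) (a b : Fin 3 → ℝ) :
    weightedModulus D33 D44 ((Rz θ).mulVec a) ((Rz θ).mulVec b) =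
      weightedModulus D33 D44 a b := by
  unfold weightedModulus
  have h := Real.sin_sq_add_cos_sq θ
  have ha : ((Rz θ).mulVec a) 0 ^ 2 + ((Rz θ).mulVec a) 1 ^ 2 = a 0 ^ 2 + a 1 ^ 2 := by
    simp [Rz, Matrix.mulVec, dotProduct, Fin.sum_univ_succ]
    linear_combination (a 0 ^ 2 + a 1 ^ 2) * h
  have ha2 : ((Rz θ).mulVec a) 2 = a 2 := by
    simp [Rz, Matrix.mulVec, dotProduct, Fin.sum_univ_succ]
  have hb : ((Rz θ).mulVec b) 0 ^ 2 + ((Rz θ).mulVec b) 1 ^ 2 = b 0 ^ 2 + b 1 ^ 2 := by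
    simp [Rz, Matrix.mulVec, dotProduct, Fin.sum_univ_succ]
    linear_combination (b 0 ^ 2 + b 1 ^ 2) * h
  have hb2 : ((Rz θ).mulVec b) 2 = b 2 := by
    simp [Rz, Matrix.mulVec, dotProduct, Fin.sum_univ_succ]
  rw [ha, ha2, hb, hb2]

/-- First assertion of Theorem 1 of the paper: the `α`-left-invariance of the
new kernel approximation, `p(R_z(α') y, β, γ + α') = p(y, β, γ)`. -/
theorem pNew_alpha_left_invariant (D33 D44 t : ℝ) (hD33 : 0 < D33) (hD44 : 0 < D44)
    (ht : 0 < t) (y : Fin 3 → ℝ) (β γ : ℝ) (hβ : β ∈ Set.Ioo (-Real.pi) Real.pi)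
    (hβ0 : β ≠ 0) (α' : ℝ) :
    pNew D33 D44 t ((Rz α').mulVec y) β (γ + α') = pNew D33 D44 t y β γ := by
  have hc1 : c1 ((Rz α').mulVec y) β (γ + α') = (Rz α').mulVec (c1 y β γ) := by
    unfold c1
    rw [c2_add, F_Rz]
  unfold pNew
  rw [hc1, c2_add, weightedModulus_Rz]
end
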